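/- With notation as follows: Z1=[-1,0,1], Z2=[0,-1,1], Z3=[1,0,1], Z4=[0,1,1], Z5=[0,0,1], Z6=[1,-1,0], Z7=[1,1,0], Z8=[0,1,0], Z9=[1,0,0], P=[a,b,c], L1=y, L2=x, L3=z, and M_j the linear form defining the line through P and Z_j (e.g., M_j(x,y,z) = det of the 3x3 matrix with rows (x,y,z), (a,b,c), Z_j). Define G1 = L1·L2·M6·M7, G2 = L1·L3·M2·M4, G3 = L2·L3·M1·M3. Then the determinant of the 3x3 matrix whose columns are ((Gi)_{xx}(P), (Gi)_{xy}(P), (Gi)_{yy}(P)) for i=1,2,3 is identically zero as a polynomial in a, b, c. -/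

import Mathlib

open MvPolynomial

noncomputable section

/-- The linear form cutting out the line through `P = [a,b,c]` and the point `p`,
namely the determinant of the matrix with rows `(x,y,z)`, `(a,b,c)`, `p`. -/
def Mform (a b c : ℂ) (p : Fin 3 → ℂ) : MvPolynomial (Fin 3) ℂ :=
  C (b * p 2 - c * p 1) * X 0 - C (a * p 2 - c * p 0) * X 1 + C (a * p 1 - b * p 0) * X 2

/-- `G₁ = L₁·L₂·M₆·M₇` with `L₁ = y`, `L₂ = x`. -/
def G1 (a b c : ℂ) : MvPolynomial (Fin 3) ℂ :=
  X 1 * X 0 * Mform a b c ![1, -1, 0] * Mform a b c ![1, 1, 0]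

/-- `G₂ = L₁·L₃·M₂·M₄` with `L₁ = y`, `L₃ = z`. -/
def G2 (a b c : ℂ) : MvPolynomial (Fin 3) ℂ :=
  X 1 * X 2 * Mform a b c ![0, -1, 1] * Mform a b c ![0, 1, 1]

/-- `G₃ = L₂·L₃·M₁·M₃` with `L₂ = x`, `L₃ = z`. -/
def G3 (a b c : ℂ) : MvPolynomial (Fin 3) ℂ :=
  X 0 * X 2 * Mform a b c ![-1, 0, 1] * Mform a b c ![1, 0, 1]

/-!
Every `M_j` vanishes at `P`, so by the Leibniz rule the Hessian (in `x, y`) of `G = L L' M M'`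
at `P` is `(L L')(P)` times the symmetric product of the gradients of `M` and `M'`. Up to these
scalar factors, the three columns are the coefficient vectors of the binary quadratic forms
cutting out the line pairs `{PZ₆, PZ₇}`, `{PZ₂, PZ₄}`, `{PZ₁, PZ₃}`. These are the joins of `P`
with the pairs of opposite vertices of the complete quadrilateral `x ± y ± z = 0`, so by
Desargues' involution theorem they belong to one involution of the pencil through `P`: the
three quadratic forms are linearly dependent.
-/

theorem eval_pderiv_pderiv_mul_mul_of_eval_eq_zero {R σ : Type*} [CommSemiring R]
    (i j : σ) (A M N : MvPolynomial σ R) {P : σ → R} (hM : eval P M = 0) (hN : eval P N = 0) :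
    eval P (pderiv i (pderiv j (A * M * N))) =
      eval P A * (eval P (pderiv i M) * eval P (pderiv j N) +
        eval P (pderiv j M) * eval P (pderiv i N)) := by
  simp only [pderiv_mul, map_add, map_mul, hM, hN]
  ring

section Mform

variable (a b c : ℂ) (p : Fin 3 → ℂ)

theorem eval_Mform_self : eval ![a, b, c] (Mform a b c p) = 0 := by
  simp only [Mform, map_add, map_sub, map_mul, eval_C, eval_X, Matrix.cons_val_zero,
    Matrix.cons_val_one, Matrix.cons_val_two, Matrix.tail_cons, Matrix.head_cons]
  ring

theorem pderiv_zero_Mform : pderiv 0 (Mform a b c p) = C (b * p 2 - c * p 1) := by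
  simp [Mform, pderiv_X]

theorem pderiv_one_Mform : pderiv 1 (Mform a b c p) = -C (a * p 2 - c * p 0) := by
  simp [Mform, pderiv_X]

end Mform

/-- The determinant of the matrix of second-order partials (in `x` and `y`) of
`G₁, G₂, G₃` evaluated at `P = [a,b,c]` vanishes identically in `a, b, c`. -/
theorem stmt6 :
    ∀ a b c : ℂ,
      Matrix.det (Matrix.of
        ![![eval ![a,b,c] (pderiv 0 (pderiv 0 (G1 a b c))),
            eval ![a,b,c] (pderiv 0 (pderiv 0 (G2 a b c))),
            eval ![a,b,c] (pderiv 0 (pderiv 0 (G3 a b c)))],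
          ![eval ![a,b,c] (pderiv 0 (pderiv 1 (G1 a b c))),
            eval ![a,b,c] (pderiv 0 (pderiv 1 (G2 a b c))),
            eval ![a,b,c] (pderiv 0 (pderiv 1 (G3 a b c)))],
          ![eval ![a,b,c] (pderiv 1 (pderiv 1 (G1 a b c))),
            eval ![a,b,c] (pderiv 1 (pderiv 1 (G2 a b c))),
            eval ![a,b,c] (pderiv 1 (pderiv 1 (G3 a b c)))]]) = 0 := by
  intro a b c
  simp only [G1, G2, G3, eval_pderiv_pderiv_mul_mul_of_eval_eq_zero _ _ _ _ _
    (eval_Mform_self a b c _) (eval_Mform_self a b c _), pderiv_zero_Mform, pderiv_one_Mform,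
    map_neg, eval_C, map_mul, eval_X, Matrix.det_fin_three, Matrix.of_apply, Matrix.cons_val_zero,
    Matrix.cons_val_one, Matrix.cons_val_two, Matrix.tail_cons, Matrix.head_cons]
  ring
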